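/- A minimal valid function π is a facet if and only if there is no nonzero function π̄ ∈ Π̄^{E(π)} such that π + π̄ is a minimal valid function. -/

import Mathlib

/-- A finite-support function `y : ℝ → ℕ` is feasible if `∑ r, r·y(r) − f ∈ ℤ`. -/
def Feasible (f : ℝ) (y : ℝ →₀ ℕ) : Prop :=
  ∃ z : ℤ, (∑ r ∈ y.support, r * (y r : ℝ)) - f = (z : ℝ)

/-- `π` is a valid function: nonnegative, and `∑ r, π(r)·y(r) ≥ 1` for every feasible `y`. -/
def Valid (f : ℝ) (π : ℝ → ℝ) : Prop :=
  (∀ x, 0 ≤ π x) ∧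
    ∀ y : ℝ →₀ ℕ, Feasible f y → 1 ≤ ∑ r ∈ y.support, π r * (y r : ℝ)

/-- A valid function is minimal if no other valid function is pointwise ≤ it. -/
def MinimalValid (f : ℝ) (π : ℝ → ℝ) : Prop :=
  Valid f π ∧ ¬ ∃ π' : ℝ → ℝ, Valid f π' ∧ (∀ x, π' x ≤ π x) ∧ π' ≠ π

/-- `P(π)`: the set of feasible `y` with `∑ r, π(r)·y(r) = 1`. -/
def Pset (f : ℝ) (π : ℝ → ℝ) : Set (ℝ →₀ ℕ) :=
  {y | Feasible f y ∧ ∑ r ∈ y.support, π r * (y r : ℝ) = 1}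

/-- `E(π) = {(x,y) : π(x) + π(y) = π(x+y)}`. -/
def Eset (π : ℝ → ℝ) : Set (ℝ × ℝ) :=
  {p | π p.1 + π p.2 = π (p.1 + p.2)}

/-- A valid function `π` is a facet if every valid `π'` with `P(π) ⊆ P(π')` equals `π`. -/
def IsFacet (f : ℝ) (π : ℝ → ℝ) : Prop :=
  Valid f π ∧ ∀ π' : ℝ → ℝ, Valid f π' → Pset f π ⊆ Pset f π' → π' = π

/-- A valid function `π` is a weak facet if every valid `π'` with `P(π) ⊆ P(π')`
has `P(π) = P(π')`. -/
def IsWeakFacet (f : ℝ) (π : ℝ → ℝ) : Prop :=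
  Valid f π ∧ ∀ π' : ℝ → ℝ, Valid f π' → Pset f π ⊆ Pset f π' → Pset f π = Pset f π'

/-- A valid function `π` is extreme if whenever `π = (π¹ + π²)/2` with `π¹, π²` valid,
then `π¹ = π² = π`. -/
def ExtremeFunc (f : ℝ) (π : ℝ → ℝ) : Prop :=
  Valid f π ∧ ∀ π₁ π₂ : ℝ → ℝ, Valid f π₁ → Valid f π₂ →
    (∀ x, π x = (π₁ x + π₂ x) / 2) → π₁ = π ∧ π₂ = π

/-- `π` is piecewise linear: there is a closed, discrete set `B ⊆ ℝ` of breakpoints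
such that `π` is affine on each connected component of `ℝ \ B`. -/
def PiecewiseLinear (π : ℝ → ℝ) : Prop :=
  ∃ B : Set ℝ, IsClosed B ∧
    (∀ x ∈ B, ∃ ε > (0 : ℝ), ∀ y ∈ B, |y - x| < ε → y = x) ∧
    (∀ x ∉ B, ∃ a b : ℝ, ∀ z ∈ connectedComponentIn Bᶜ x, π z = a * z + b)

/-- `π` is continuous piecewise linear. -/
def ContPiecewiseLinear (π : ℝ → ℝ) : Prop :=
  PiecewiseLinear π ∧ Continuous π

/-- The space `Π̄^E`: `π̄(0)=0`, `π̄(f)=0`, additive over `E`, and ℤ-periodic. -/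
def PerturbSpace (f : ℝ) (E : Set (ℝ × ℝ)) (p : ℝ → ℝ) : Prop :=
  p 0 = 0 ∧ p f = 0 ∧ (∀ q ∈ E, p q.1 + p q.2 = p (q.1 + q.2)) ∧
    ∀ (x : ℝ) (t : ℤ), p (x + (t : ℝ)) = p x

/-!
Lowering a minimal valid `π` at a single point destroys validity. Testing this against suitable
multisets shows that `π` is subadditive, `ℤ`-periodic, `π 0 = 0` and symmetric,
`π x + π (f - x) = 1`; conversely symmetry alone forces minimality.

If `p ∈ Π̄^{E(π)}`, every `y ∈ P(π)` is a decomposition of `f` along which subadditivity of `π` is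
tight, so `p` is additive along it and sums to `p f = 0` over `y`; hence `P(π) ⊆ P(π + p)` and
facetness forces `p = 0`. Conversely, if `π'` is valid with `P(π) ⊆ P(π')`, the pairs
`{x, f - x}` and triples `{x, y, f - x - y}` in `P(π)` show that `π'` is symmetric, hence minimal,
and additive on `E(π)`, so that `π' - π ∈ Π̄^{E(π)}`.
-/

open Multiset

/- A feasible `y` is handled as the multiset `y.toMultiset`, in which `r` occurs `y r` times. -/
theorem Finsupp.sum_mul_eq_sum_map_toMultiset (g : ℝ → ℝ) (y : ℝ →₀ ℕ) :
    ∑ r ∈ y.support, g r * (y r : ℝ) = (y.toMultiset.map g).sum := by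
  rw [Finsupp.toMultiset_map, Finsupp.sum_toMultiset,
    Finsupp.sum_mapDomain_index (h := fun a n => n • a) (fun _ => zero_smul ℕ _)
      (fun _ _ _ => add_smul _ _ _)]
  simp [Finsupp.sum, mul_comm]

theorem Multiset.apply_sum_eq_sum_map_of_tight {G M N : Type*} [AddCommMonoid G]
    [AddCommMonoid M] [PartialOrder M] [IsOrderedCancelAddMonoid M] [AddCommMonoid N]
    {π : G → M} {p : G → N} (hπ0 : π 0 = 0) (hπ : ∀ a b, π (a + b) ≤ π a + π b)
    (hp0 : p 0 = 0) (hp : ∀ a b, π a + π b = π (a + b) → p a + p b = p (a + b))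
    {s : Multiset G} (hs : π s.sum = (s.map π).sum) : p s.sum = (s.map p).sum := by
  induction s using Multiset.induction_on with
  | empty => simpa using hp0
  | cons a s ih =>
    simp only [sum_cons, map_cons] at hs ⊢
    have hle := le_sum_of_subadditive π hπ0.le hπ s
    have htail : π s.sum = (s.map π).sum :=
      hle.antisymm (le_of_add_le_add_left (hs ▸ hπ a s.sum))
    have hE : π a + π s.sum = π (a + s.sum) := by rw [htail, hs]
    rw [← hp a s.sum hE, ih htail]

section

variable {f : ℝ} {π π' : ℝ → ℝ}

theorem feasible_iff {y : ℝ →₀ ℕ} :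
    Feasible f y ↔ ∃ z : ℤ, y.toMultiset.sum - f = z := by
  rw [Feasible, ← map_id y.toMultiset, ← Finsupp.sum_mul_eq_sum_map_toMultiset]
  rfl

theorem mem_pset_iff {y : ℝ →₀ ℕ} :
    y ∈ Pset f π ↔ (∃ z : ℤ, y.toMultiset.sum - f = z) ∧ (y.toMultiset.map π).sum = 1 := by
  rw [Pset, Set.mem_ofPred_eq, feasible_iff, Finsupp.sum_mul_eq_sum_map_toMultiset]

theorem toFinsupp_mem_pset_iff {s : Multiset ℝ} :
    toFinsupp s ∈ Pset f π ↔ (∃ z : ℤ, s.sum - f = z) ∧ (s.map π).sum = 1 := by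
  rw [mem_pset_iff, toFinsupp_toMultiset]

theorem valid_iff :
    Valid f π ↔ (∀ x, 0 ≤ π x) ∧
      ∀ s : Multiset ℝ, (∃ z : ℤ, s.sum - f = z) → 1 ≤ (s.map π).sum := by
  refine and_congr_right fun _ => ⟨fun h s hs => ?_, fun h y hy => ?_⟩
  · have := h (toFinsupp s) (by rwa [feasible_iff, toFinsupp_toMultiset])
    rwa [Finsupp.sum_mul_eq_sum_map_toMultiset, toFinsupp_toMultiset] at this
  · rw [Finsupp.sum_mul_eq_sum_map_toMultiset]
    exact h _ (feasible_iff.1 hy)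

theorem Valid.one_le_sum_map (hπ : Valid f π) {s : Multiset ℝ}
    (hs : ∃ z : ℤ, s.sum - f = z) : 1 ≤ (s.map π).sum :=
  (valid_iff.1 hπ).2 s hs

theorem Valid.sum_map_nonneg (hπ : Valid f π) (s : Multiset ℝ) : 0 ≤ (s.map π).sum :=
  sum_nonneg fun _ hr => by
    obtain ⟨a, -, rfl⟩ := mem_map.1 hr
    exact hπ.1 a

theorem Valid.minimalValid_of_add_map_sub_eq_one (hπ : Valid f π)
    (h : ∀ x, π x + π (f - x) = 1) : MinimalValid f π := by
  refine ⟨hπ, fun ⟨ρ, hρ, hle, hne⟩ => hne (funext fun x => (hle x).antisymm ?_)⟩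
  have := hρ.one_le_sum_map (s := {x, f - x}) ⟨0, by simp⟩
  simp only [insert_eq_cons, map_cons, map_singleton, sum_cons, sum_singleton] at this
  linarith [h x, hle (f - x)]

theorem sum_map_eq_one_of_pset_subset (h : Pset f π ⊆ Pset f π')
    {s : Multiset ℝ} (hs : ∃ z : ℤ, s.sum - f = z) (hs1 : (s.map π).sum = 1) :
    (s.map π').sum = 1 :=
  (toFinsupp_mem_pset_iff.1 (h (toFinsupp_mem_pset_iff.2 ⟨hs, hs1⟩))).2

namespace MinimalValid

/-- Lowering `π x` to `v` breaks validity, and `t + m • {x}` is a witness. -/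
theorem exists_sum_map_add_lt_one (hπ : MinimalValid f π) {x v : ℝ} (hv : 0 ≤ v)
    (hlt : v < π x) : ∃ (t : Multiset ℝ) (m : ℕ), 0 < m ∧
      (∃ z : ℤ, t.sum + m * x - f = z) ∧ (t.map π).sum + m * v < 1 := by
  set π' := Function.update π x v
  have hπ'x : π' x = v := Function.update_self ..
  have hπ' : ∀ r ≠ x, π' r = π r := fun r hr => Function.update_of_ne hr ..
  have hle : ∀ r, π' r ≤ π r := fun r => by
    rcases eq_or_ne r x with rfl | hr
    exacts [hπ'x ▸ hlt.le, (hπ' r hr).le]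
  have hnonneg : ∀ r, 0 ≤ π' r := fun r => by
    rcases eq_or_ne r x with rfl | hr
    exacts [hπ'x ▸ hv, hπ' r hr ▸ hπ.1.1 r]
  have hnot : ¬ Valid f π' := fun h =>
    hπ.2 ⟨π', h, hle, fun h' => hlt.ne (hπ'x ▸ congrFun h' x)⟩
  simp only [valid_iff, hnonneg, implies_true, true_and, not_forall, not_le] at hnot
  obtain ⟨s, hs, hs1⟩ := hnot
  set t := s.filter (· ≠ x)
  have hsplit : s = t + replicate (s.count x) x := by
    rw [← filter_eq', add_comm, filter_add_not]
  have hmap : (s.map π').sum = (t.map π).sum + s.count x * v := by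
    conv_lhs => rw [hsplit]
    rw [map_add, sum_add, map_replicate, sum_replicate, nsmul_eq_mul,
      hπ'x, map_congr rfl fun r hr => hπ' r ((mem_filter.1 hr).2)]
  refine ⟨t, s.count x, Nat.pos_of_ne_zero fun h0 => ?_, ?_, hmap ▸ hs1⟩
  · rw [h0, replicate_zero, add_zero] at hsplit
    rw [hmap, h0, Nat.cast_zero, zero_mul, add_zero, ← hsplit] at hs1
    exact (hπ.1.one_le_sum_map hs).not_gt hs1
  · rw [hsplit, sum_add, sum_replicate, nsmul_eq_mul] at hs
    exact hs

theorem le_sum_map (hπ : MinimalValid f π) {c : ℝ} {S : Multiset ℝ}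
    (hS : ∃ z : ℤ, S.sum - c = z) : π c ≤ (S.map π).sum := by
  by_contra! hlt
  have hS0 := hπ.1.sum_map_nonneg S
  obtain ⟨t, m, -, ⟨z, hz⟩, ht⟩ := hπ.exists_sum_map_add_lt_one hS0 hlt
  obtain ⟨w, hw⟩ := hS
  have := hπ.1.one_le_sum_map (s := t + m • S) ⟨z + m * w, by
    rw [sum_add, sum_nsmul, nsmul_eq_mul]; push_cast; linear_combination hz + m * hw⟩
  rw [map_add, map_nsmul, sum_add, sum_nsmul, nsmul_eq_mul] at this
  linarith

theorem map_zero (hπ : MinimalValid f π) : π 0 = 0 :=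
  le_antisymm (by simpa using hπ.le_sum_map (S := 0) ⟨0, by simp⟩) (hπ.1.1 0)

theorem map_add_le (hπ : MinimalValid f π) (a b : ℝ) : π (a + b) ≤ π a + π b := by
  simpa using hπ.le_sum_map (S := {a, b}) ⟨0, by simp⟩

theorem map_add_intCast (hπ : MinimalValid f π) (x : ℝ) (t : ℤ) : π (x + t) = π x :=
  le_antisymm (by simpa using hπ.le_sum_map (S := {x}) ⟨-t, by simp⟩)
    (by simpa using hπ.le_sum_map (S := {x + t}) ⟨t, by simp⟩)

theorem le_one (hπ : MinimalValid f π) (x : ℝ) : π x ≤ 1 := by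
  by_contra! h
  obtain ⟨t, m, hm, -, ht⟩ := hπ.exists_sum_map_add_lt_one zero_le_one h
  have hT := hπ.1.sum_map_nonneg t
  have hm1 : (1 : ℝ) ≤ m := by exact_mod_cast hm
  linarith

theorem map_f (hπ : MinimalValid f π) : π f = 1 :=
  (hπ.le_one f).antisymm (by simpa using hπ.1.one_le_sum_map (s := {f}) ⟨0, by simp⟩)

theorem add_map_sub_eq_one (hπ : MinimalValid f π) (x : ℝ) : π x + π (f - x) = 1 := by
  have hge : 1 ≤ π x + π (f - x) := by
    simpa using hπ.1.one_le_sum_map (s := {x, f - x}) ⟨0, by simp⟩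
  by_contra hne
  set σ := π x + π (f - x)
  have hσ : 1 < σ := lt_of_le_of_ne hge (Ne.symm hne)
  have hx : 0 < π x := by linarith [hπ.le_one (f - x)]
  -- lowering `π x` to `π x / σ` would keep `π` valid
  obtain ⟨t, m, hm, ⟨z, hz⟩, ht⟩ := hπ.exists_sum_map_add_lt_one (v := π x / σ) (by positivity)
    (div_lt_self hx hσ)
  obtain ⟨k, rfl⟩ : ∃ k, m = k + 1 := ⟨m - 1, by omega⟩
  have hsub : π (f - x) ≤ (t.map π).sum + k * π x := by
    simpa using hπ.le_sum_map (S := t + replicate k x) ⟨z, by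
      rw [sum_add, sum_replicate, nsmul_eq_mul]; push_cast at hz; linarith⟩
  have hT := hπ.1.sum_map_nonneg t
  rw [mul_div_assoc', add_div' _ _ _ (by positivity), div_lt_one (by positivity)] at ht
  push_cast at ht
  nlinarith

theorem of_pset_subset (hπ : MinimalValid f π) (hπ' : Valid f π')
    (h : Pset f π ⊆ Pset f π') : MinimalValid f π' :=
  hπ'.minimalValid_of_add_map_sub_eq_one fun x => by
    simpa using sum_map_eq_one_of_pset_subset h (s := {x, f - x}) ⟨0, by simp⟩
      (by simpa using hπ.add_map_sub_eq_one x)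

theorem map_add_eq_of_pset_subset (hπ : MinimalValid f π) (hπ' : Valid f π')
    (h : Pset f π ⊆ Pset f π') {q : ℝ × ℝ} (hq : q ∈ Eset π) :
    π' q.1 + π' q.2 = π' (q.1 + q.2) := by
  obtain ⟨x, y⟩ := q
  have hxy : π x + π y = π (x + y) := hq
  have htriple := sum_map_eq_one_of_pset_subset h (s := {x, y, f - (x + y)}) ⟨0, by
    simp only [insert_eq_cons, sum_cons, sum_singleton, Int.cast_zero]; ring⟩
    (by simpa [← add_assoc, hxy] using hπ.add_map_sub_eq_one (x + y))
  have hpair := (hπ.of_pset_subset hπ' h).add_map_sub_eq_one (x + y)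
  simp only [insert_eq_cons, map_cons, map_singleton, sum_cons, sum_singleton] at htriple
  linarith

theorem perturbSpace_sub (hπ : MinimalValid f π) (hπ' : MinimalValid f π')
    (hE : ∀ q ∈ Eset π, π' q.1 + π' q.2 = π' (q.1 + q.2)) :
    PerturbSpace f (Eset π) (π' - π) := by
  refine ⟨by simp [hπ.map_zero, hπ'.map_zero], by simp [hπ.map_f, hπ'.map_f],
    fun q hq => ?_, fun x t => by simp [hπ.map_add_intCast, hπ'.map_add_intCast]⟩
  have : π q.1 + π q.2 = π (q.1 + q.2) := hq
  simp only [Pi.sub_apply]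
  linarith [hE q hq]

theorem pset_subset_pset_add (hπ : MinimalValid f π) {p : ℝ → ℝ}
    (hp : PerturbSpace f (Eset π) p) : Pset f π ⊆ Pset f (π + p) := by
  obtain ⟨hp0, hpf, hpE, hpper⟩ := hp
  intro y hy
  rw [mem_pset_iff] at hy ⊢
  obtain ⟨⟨z, hz⟩, hy1⟩ := hy
  have hsum : y.toMultiset.sum = f + z := by linarith
  have htight : p y.toMultiset.sum = (y.toMultiset.map p).sum :=
    Multiset.apply_sum_eq_sum_map_of_tight hπ.map_zero hπ.map_add_le hp0
      (fun a b hab => hpE (a, b) hab) (by rw [hy1, hsum, hπ.map_add_intCast, hπ.map_f])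
  refine ⟨⟨z, hz⟩, ?_⟩
  rw [Pi.add_def, sum_map_add, hy1, ← htight, hsum, hpper, hpf, add_zero]

end MinimalValid

end

theorem stmt7_general (f : ℝ) (π : ℝ → ℝ)
    (hπ : MinimalValid f π) :
    IsFacet f π ↔
      ¬ ∃ p : ℝ → ℝ, p ≠ 0 ∧ PerturbSpace f (Eset π) p ∧
        MinimalValid f (fun x => π x + p x) := by
  constructor
  · rintro ⟨-, hfacet⟩ ⟨p, hp0, hp, hmin⟩
    exact hp0 (by simpa using hfacet (π + p) hmin.1 (hπ.pset_subset_pset_add hp))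
  · refine fun H => ⟨hπ.1, fun π' hπ' hsub => ?_⟩
    by_contra hne
    have hmin' := hπ.of_pset_subset hπ' hsub
    refine H ⟨π' - π, sub_ne_zero.2 hne,
      hπ.perturbSpace_sub hmin' fun q hq => hπ.map_add_eq_of_pset_subset hπ' hsub hq, ?_⟩
    simpa using hmin'

theorem stmt7 (f : ℝ) (hf : f ∈ Set.Ioo (0 : ℝ) 1) (π : ℝ → ℝ)
    (hπ : MinimalValid f π) :
    IsFacet f π ↔
      ¬ ∃ p : ℝ → ℝ, p ≠ 0 ∧ PerturbSpace f (Eset π) p ∧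
        MinimalValid f (fun x => π x + p x) :=
  stmt7_general f π hπ
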